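/- Let n ≥ 1, let p_1 < ⋯ < p_n be real numbers, and let a ≥ 0, ε > 0, C ≥ 0. For reals p_1 < ⋯ < p_n and ρ ≤ 0, set m_{AB}(ρ) := min{1, exp(2(p_B − p_A)ρ)}. Then there exist ρ_0 ≤ 0 and C′ ≥ 0 such that for every ρ ≤ ρ_0 and every real n×n matrix X with |X_{AB} − δ_{AB}| ≤ C ⟨ρ⟩^a e^{2ερ} m_{AB}(ρ) for all A, B ∈ {1,…,n}, the matrix X is invertible and |(X^{−1})_{AB} − δ_{AB}| ≤ C′ ⟨ρ⟩^a e^{2ερ} m_{AB}(ρ) for all A, B ∈ {1,…,n}. -/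

import Mathlib

/-- The Japanese bracket `⟨x⟩ = (1 + x²)^{1/2}`. -/
noncomputable def jbr (x : ℝ) : ℝ := Real.sqrt (1 + x ^ 2)

lemma one_le_jbr (x : ℝ) : 1 ≤ jbr x := by
  have h := Real.sq_sqrt (show (0:ℝ) ≤ 1 + x ^ 2 by positivity)
  have h2 := Real.sqrt_nonneg (1 + x ^ 2)
  rw [jbr]; nlinarith

lemma jbr_pos (x : ℝ) : 0 < jbr x := lt_of_lt_of_le one_pos (one_le_jbr x)

lemma jbr_neg (x : ℝ) : jbr (-x) = jbr x := by simp [jbr]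

open Filter Real in
lemma tendsto_jbr_rpow_mul_exp (b c : ℝ) (hb : 0 ≤ b) (hc : 0 < c) :
    Tendsto (fun ρ => jbr ρ ^ b * Real.exp (c * ρ)) atBot (nhds 0) := by
  have h : Tendsto (fun x : ℝ => jbr x ^ b * Real.exp (-(c * x))) atTop (nhds 0) := by
    have hg : Tendsto (fun x : ℝ => (2:ℝ) ^ b * (x ^ b * Real.exp (-c * x))) atTop (nhds 0) := by
      have := (tendsto_rpow_mul_exp_neg_mul_atTop_nhds_zero b c hc).const_mul ((2:ℝ) ^ b)
      simpa using this
    refine squeeze_zero' ?_ ?_ hg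
    · filter_upwards with x
      exact mul_nonneg (Real.rpow_nonneg (jbr_pos x).le b) (Real.exp_pos _).le
    · filter_upwards [eventually_ge_atTop (1:ℝ)] with x hx
      have hjle : jbr x ≤ 2 * x := by
        rw [jbr]
        calc Real.sqrt (1 + x ^ 2) ≤ Real.sqrt ((2*x) ^ 2) :=
              Real.sqrt_le_sqrt (by nlinarith)
          _ = 2 * x := Real.sqrt_sq (by linarith)
      have h1 : jbr x ^ b ≤ (2 * x) ^ b :=
        Real.rpow_le_rpow (jbr_pos x).le hjle hb
      have h2 : ((2:ℝ) * x) ^ b = 2 ^ b * x ^ b :=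
        Real.mul_rpow (by norm_num) (by linarith)
      have h3 : jbr x ^ b ≤ 2 ^ b * x ^ b := by rw [← h2]; exact h1
      have h4 : (0:ℝ) ≤ Real.exp (-(c * x)) := (Real.exp_pos _).le
      calc jbr x ^ b * Real.exp (-(c * x)) ≤ (2 ^ b * x ^ b) * Real.exp (-(c * x)) :=
            mul_le_mul_of_nonneg_right h3 h4
        _ = 2 ^ b * (x ^ b * Real.exp (-c * x)) := by ring_nf
  have := h.comp tendsto_neg_atBot_atTop
  refine this.congr fun ρ => ?_
  simp only [Function.comp_apply, jbr_neg]
  ring_nf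

set_option maxHeartbeats 1000000 in
open Filter in
/-- Weighted matrix inversion.  With weights
`m_{AB}(ρ) = min{1, e^{2(p_B − p_A)ρ}}` for ordered `p₁ < ⋯ < pₙ`, there
exist `ρ₀ ≤ 0` and `C′ ≥ 0` such that for `ρ ≤ ρ₀`, any matrix `X` with
`|X_{AB} − δ_{AB}| ≤ C ⟨ρ⟩^a e^{2ερ} m_{AB}(ρ)` is invertible and its
inverse satisfies the same kind of bound with constant `C′`. -/
theorem weighted_matrix_inversion
    (n : ℕ) (hn : 1 ≤ n) (p : Fin n → ℝ) (hp : StrictMono p)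
    (a ε C : ℝ) (ha : 0 ≤ a) (hε : 0 < ε) (hC : 0 ≤ C) :
    ∃ ρ₀ : ℝ, ρ₀ ≤ 0 ∧ ∃ C' : ℝ, 0 ≤ C' ∧
      ∀ ρ ≤ ρ₀, ∀ X : Matrix (Fin n) (Fin n) ℝ,
        (∀ A B, |X A B - (if A = B then 1 else 0)| ≤
          C * jbr ρ ^ a * Real.exp (2 * ε * ρ) *
            min 1 (Real.exp (2 * (p B - p A) * ρ))) →
        IsUnit X ∧
          ∀ A B, |X⁻¹ A B - (if A = B then 1 else 0)| ≤
            C' * jbr ρ ^ a * Real.exp (2 * ε * ρ) *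
              min 1 (Real.exp (2 * (p B - p A) * ρ)) := by
  classical
  have hnn : Nonempty (Fin n) := ⟨⟨0, hn⟩⟩
  set i0 : Fin n := ⟨0, hn⟩ with hi0
  set iN : Fin n := ⟨n - 1, by omega⟩ with hiN
  set D : ℝ := p iN - p i0 with hDdef
  have hpmono := hp.monotone
  have hpD : ∀ A B : Fin n, p B - p A ≤ D := by
    intro A B
    have h1 : p B ≤ p iN := hpmono (by simp only [hiN, Fin.le_def]; omega)
    have h2 : p i0 ≤ p A := hpmono (by simp only [hi0, Fin.le_def]; omega)
    simp only [hDdef]; linarith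
  have hD : 0 ≤ D := by
    rw [hDdef]
    have h1 : p i0 ≤ p iN := hpmono (by simp only [hi0, hiN, Fin.le_def]; omega)
    linarith
  set k : ℕ := ⌈D / ε⌉₊ + 2 with hk
  have hk1 : 1 ≤ k := by omega
  have hkD : D < ((k : ℝ) - 1) * ε := by
    have h1 : D / ε ≤ (⌈D / ε⌉₊ : ℝ) := Nat.le_ceil _
    have h2 : ((k : ℝ) - 1) = (⌈D / ε⌉₊ : ℝ) + 1 := by
      simp only [hk]; push_cast; ring
    rw [h2]
    have h3 : D / ε * ε = D := div_mul_cancel₀ D hε.ne'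
    nlinarith
  set c2 : ℝ := 2 * ((k : ℝ) - 1) * ε - 2 * D with hc2def
  have hc2 : 0 < c2 := by simp only [hc2def]; nlinarith
  set φ : ℝ → ℝ := fun ρ => jbr ρ ^ a * Real.exp (2 * ε * ρ) with hφ
  have hφpos : ∀ ρ, 0 < φ ρ := fun ρ =>
    mul_pos (Real.rpow_pos_of_pos (jbr_pos ρ) a) (Real.exp_pos _)
  have htφ : Tendsto (fun ρ => (n : ℝ) * C * φ ρ) atBot (nhds 0) := by
    have := (tendsto_jbr_rpow_mul_exp a (2 * ε) ha (by linarith)).const_mul ((n : ℝ) * C)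
    simpa [hφ, mul_comm] using this
  have ev1 : ∀ᶠ ρ in atBot, (n : ℝ) * C * φ ρ ≤ 1 / 2 :=
    htφ.eventually_le_const (by norm_num)
  set G : ℝ → ℝ := fun ρ =>
    ((n : ℝ) * C) ^ k * ((jbr ρ ^ a) ^ (k - 1) * Real.exp (c2 * ρ)) with hG
  have ev2 : ∀ᶠ ρ in atBot, G ρ ≤ C := by
    rcases hC.eq_or_lt with hC0 | hC0
    · filter_upwards with ρ
      simp [hG, ← hC0, zero_pow (by omega : k ≠ 0)]
    · have htG : Tendsto G atBot (nhds 0) := by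
        have hbase : Tendsto (fun ρ => jbr ρ ^ (a * ((k : ℕ) - 1 : ℕ)) * Real.exp (c2 * ρ))
            atBot (nhds 0) :=
          tendsto_jbr_rpow_mul_exp _ _ (by positivity) hc2
        have h5 := hbase.const_mul (((n : ℝ) * C) ^ k)
        rw [mul_zero] at h5
        refine h5.congr fun ρ => ?_
        simp only [hG]
        congr 2
        rw [Real.rpow_mul (jbr_pos ρ).le, Real.rpow_natCast]
      exact htG.eventually_le_const hC0
  obtain ⟨ρ₁, hρ₁⟩ := Filter.eventually_atBot.mp (ev1.and ev2)
  refine ⟨min ρ₁ 0, min_le_right _ _, 3 * C, by linarith, ?_⟩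
  intro ρ hρ X hX
  have hρ0 : ρ ≤ 0 := le_trans hρ (min_le_right _ _)
  obtain ⟨h1, h2⟩ := hρ₁ ρ (le_trans hρ (min_le_left _ _))
  set η : ℝ := C * φ ρ with hηdef
  have hη0 : 0 ≤ η := mul_nonneg hC (hφpos ρ).le
  have hnη : (n : ℝ) * η ≤ 1 / 2 := by
    calc (n : ℝ) * η = (n : ℝ) * C * φ ρ := by rw [hηdef]; ring
      _ ≤ 1 / 2 := h1
  have hnη0 : 0 ≤ (n : ℝ) * η := mul_nonneg (Nat.cast_nonneg n) hη0
  have hη12 : η ≤ 1 / 2 := by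
    have hn1 : (1 : ℝ) ≤ (n : ℝ) := by exact_mod_cast hn
    nlinarith
  set m : Fin n → Fin n → ℝ := fun A B => min 1 (Real.exp (2 * (p B - p A) * ρ)) with hm
  have hm_pos : ∀ A B, 0 < m A B := fun A B => lt_min one_pos (Real.exp_pos _)
  have hm_le1 : ∀ A B, m A B ≤ 1 := fun A B => min_le_left _ _
  have hm_sub : ∀ A B Q : Fin n, m A Q * m Q B ≤ m A B := by
    intro A B Q
    refine le_min ?_ ?_
    · calc m A Q * m Q B ≤ 1 * 1 :=
            mul_le_mul (hm_le1 _ _) (hm_le1 _ _) (hm_pos _ _).le one_pos.le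
        _ = 1 := by norm_num
    · calc m A Q * m Q B ≤
            Real.exp (2 * (p Q - p A) * ρ) * Real.exp (2 * (p B - p Q) * ρ) :=
            mul_le_mul (min_le_right _ _) (min_le_right _ _) (hm_pos _ _).le
              (Real.exp_pos _).le
        _ = Real.exp (2 * (p B - p A) * ρ) := by rw [← Real.exp_add]; ring_nf
  have hm_ge : ∀ A B, Real.exp (2 * D * ρ) ≤ m A B := by
    intro A B
    refine le_min ?_ ?_
    · exact Real.exp_le_one_iff.mpr (by nlinarith)
    · exact Real.exp_le_exp.mpr (by nlinarith [hpD A B])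
  -- key smallness condition
  have hkη : ((n : ℝ) * η) ^ k ≤ η * Real.exp (2 * D * ρ) := by
    have hmul : G ρ * (φ ρ * Real.exp (2 * D * ρ)) ≤ C * (φ ρ * Real.exp (2 * D * ρ)) :=
      mul_le_mul_of_nonneg_right h2 (mul_nonneg (hφpos ρ).le (Real.exp_pos _).le)
    obtain ⟨j, hj⟩ : ∃ j, k = j + 1 := ⟨k - 1, by omega⟩
    have hjc : ((k : ℝ) - 1) = (j : ℝ) := by rw [hj]; push_cast; ring
    have hexp1 : Real.exp (2 * ε * ρ) ^ (j + 1) = Real.exp (((j:ℝ) + 1) * (2 * ε * ρ)) := by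
      rw [← Real.exp_nat_mul]; push_cast; ring_nf
    have hexp2 : Real.exp (c2 * ρ) * (Real.exp (2 * ε * ρ) * Real.exp (2 * D * ρ)) =
        Real.exp (((j:ℝ) + 1) * (2 * ε * ρ)) := by
      rw [← Real.exp_add, ← Real.exp_add]
      congr 1
      rw [hc2def, hjc]; ring
    have hLHS : ((n : ℝ) * η) ^ k = G ρ * (φ ρ * Real.exp (2 * D * ρ)) := by
      calc ((n : ℝ) * η) ^ k
          = ((n:ℝ) * C) ^ (j+1) * ((jbr ρ ^ a) ^ (j+1) * Real.exp (2 * ε * ρ) ^ (j+1)) := by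
            rw [hj, hηdef, hφ]
            rw [show (n:ℝ) * (C * (jbr ρ ^ a * Real.exp (2 * ε * ρ))) =
              ((n:ℝ) * C) * (jbr ρ ^ a * Real.exp (2 * ε * ρ)) by ring]
            rw [mul_pow, mul_pow, mul_pow]
        _ = ((n:ℝ) * C) ^ (j+1) *
              ((jbr ρ ^ a) ^ (j+1) * Real.exp (((j:ℝ) + 1) * (2 * ε * ρ))) := by rw [hexp1]
        _ = G ρ * (φ ρ * Real.exp (2 * D * ρ)) := by
            simp only [hG, hφ, hj, Nat.add_sub_cancel]
            rw [← hexp2, pow_succ (jbr ρ ^ a) j]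
            ring
    rw [hLHS, hηdef]
    calc G ρ * (φ ρ * Real.exp (2 * D * ρ)) ≤ C * (φ ρ * Real.exp (2 * D * ρ)) := hmul
      _ = C * φ ρ * Real.exp (2 * D * ρ) := by ring
  -- entry bound hypothesis restated
  have hE : ∀ A B, |X A B - (if A = B then 1 else 0)| ≤ η * m A B := by
    intro A B
    calc |X A B - (if A = B then 1 else 0)| ≤
        C * jbr ρ ^ a * Real.exp (2 * ε * ρ) * min 1 (Real.exp (2 * (p B - p A) * ρ)) := hX A B
      _ = η * m A B := by simp only [hηdef, hφ, hm]; ring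
  have hEle : ∀ A B, |X A B - (if A = B then 1 else 0)| ≤ η :=
    fun A B => le_trans (hE A B) (mul_le_of_le_one_right hη0 (hm_le1 A B))
  -- invertibility
  have hinj : Function.Injective X.mulVec := by
    intro u w huw
    have h0 : X.mulVec (u - w) = 0 := by
      rw [Matrix.mulVec_sub, huw, sub_self]
    set v : Fin n → ℝ := u - w with hv
    have hveq : v = 0 := by
      set T : ℝ := Finset.univ.sup' Finset.univ_nonempty (fun A => |v A|) with hT
      have hTle : ∀ A, |v A| ≤ T := fun A =>
        Finset.le_sup' (fun A => |v A|) (Finset.mem_univ A)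
      have hT0 : 0 ≤ T := le_trans (abs_nonneg _) (hTle i0)
      have hbound : ∀ A, |v A| ≤ (n : ℝ) * η * T := by
        intro A
        have hmv : ∑ B, X A B * v B = 0 := by
          have := congrFun h0 A
          simpa [Matrix.mulVec, dotProduct] using this
        have hvA : v A = ∑ B, (if A = B then (1:ℝ) else 0) * v B := by
          simp [ite_mul, Finset.sum_ite_eq]
        have hvA2 : v A = ∑ B, ((if A = B then (1:ℝ) else 0) - X A B) * v B := by
          simp only [sub_mul, Finset.sum_sub_distrib, hmv, sub_zero]
          exact hvA
        calc |v A| = |∑ B, ((if A = B then (1:ℝ) else 0) - X A B) * v B| := by rw [← hvA2]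
          _ ≤ ∑ B, |((if A = B then (1:ℝ) else 0) - X A B) * v B| :=
              Finset.abs_sum_le_sum_abs _ _
          _ ≤ ∑ _B : Fin n, η * T := by
              refine Finset.sum_le_sum fun B _ => ?_
              rw [abs_mul, abs_sub_comm]
              exact mul_le_mul (hEle A B) (hTle B) (abs_nonneg _) hη0
          _ = (n : ℝ) * η * T := by
              rw [Finset.sum_const, Finset.card_univ, Fintype.card_fin, nsmul_eq_mul]
              ring
      have hTT : T ≤ (n : ℝ) * η * T :=
        Finset.sup'_le _ _ fun A _ => hbound A
      have hT00 : T ≤ 0 := by nlinarith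
      funext A
      have : |v A| ≤ 0 := le_trans (hTle A) hT00
      have := abs_nonpos_iff.mp this
      simpa using this
    have : u - w = 0 := hveq
    exact sub_eq_zero.mp this
  have hU : IsUnit X := Matrix.mulVec_injective_iff_isUnit.mp hinj
  refine ⟨hU, ?_⟩
  have hdet : IsUnit X.det := (Matrix.isUnit_iff_isUnit_det X).mp hU
  have hXinv : X * X⁻¹ = 1 := Matrix.mul_nonsing_inv X hdet
  set E : Fin n → Fin n → ℝ := fun A B => X A B - (if A = B then 1 else 0) with hEdef
  set F : Fin n → Fin n → ℝ := fun A B => X⁻¹ A B - (if A = B then 1 else 0) with hFdef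
  have hrec : ∀ A B, F A B = -(E A B) - ∑ Q, E A Q * F Q B := by
    intro A B
    have hmat : (X - 1) * X⁻¹ = 1 - X⁻¹ := by
      rw [Matrix.sub_mul, hXinv, Matrix.one_mul]
    have hent := congrFun (congrFun hmat A) B
    rw [Matrix.mul_apply] at hent
    simp only [Matrix.sub_apply, Matrix.one_apply] at hent
    have hsplit : ∑ Q, (X A Q - if A = Q then (1:ℝ) else 0) * X⁻¹ Q B
        = E A B + ∑ Q, E A Q * F Q B := by
      have hQ : ∀ Q, X⁻¹ Q B = (if Q = B then (1:ℝ) else 0) + F Q B := by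
        intro Q; simp only [hFdef]; ring
      simp_rw [hQ, mul_add, Finset.sum_add_distrib, mul_ite, mul_one, mul_zero]
      simp only [Finset.sum_ite_eq', Finset.mem_univ, if_true, hEdef]
    rw [hsplit] at hent
    simp only [hFdef, hEdef] at *
    linarith
  have habs : ∀ A B, |F A B| ≤ |E A B| + ∑ Q, |E A Q| * |F Q B| := by
    intro A B
    rw [hrec A B]
    calc |-(E A B) - ∑ Q, E A Q * F Q B| ≤ |-(E A B)| + |∑ Q, E A Q * F Q B| :=
          abs_sub _ _
      _ ≤ |E A B| + ∑ Q, |E A Q * F Q B| := by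
          rw [abs_neg]
          exact add_le_add_right (Finset.abs_sum_le_sum_abs _ _) _
      _ = |E A B| + ∑ Q, |E A Q| * |F Q B| := by simp [abs_mul]
  have hEb : ∀ A B, |E A B| ≤ η * m A B := hE
  have hEb' : ∀ A B, |E A B| ≤ η := hEle
  -- uniform bound on F
  have hK : ∀ Q B, |F Q B| ≤ 2 * η := by
    intro Q B
    set T : ℝ := Finset.univ.sup' Finset.univ_nonempty (fun A => |F A B|) with hT
    have hTle : ∀ A, |F A B| ≤ T := fun A =>
      Finset.le_sup' (fun A => |F A B|) (Finset.mem_univ A)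
    have hT0 : 0 ≤ T := le_trans (abs_nonneg _) (hTle i0)
    have hTT : T ≤ η + (n : ℝ) * η * T := by
      refine Finset.sup'_le _ _ fun A _ => ?_
      calc |F A B| ≤ |E A B| + ∑ Q, |E A Q| * |F Q B| := habs A B
        _ ≤ η + ∑ _Q : Fin n, η * T := by
            refine add_le_add (hEb' A B) (Finset.sum_le_sum fun Q _ => ?_)
            exact mul_le_mul (hEb' A Q) (hTle Q) (abs_nonneg _) hη0
        _ = η + (n : ℝ) * η * T := by
            rw [Finset.sum_const, Finset.card_univ, Fintype.card_fin, nsmul_eq_mul]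
            ring
    have hT2 : T ≤ 2 * η := by nlinarith
    exact le_trans (hTle Q) hT2
  -- the inductive entrywise bound
  have hind : ∀ j : ℕ, ∀ A B, |F A B| ≤ 2 * η * m A B + ((n : ℝ) * η) ^ j * (2 * η) := by
    intro j
    induction j with
    | zero =>
        intro A B
        have := hK A B
        have hmm : 0 ≤ 2 * η * m A B := by positivity
        simp only [pow_zero, one_mul]
        linarith
    | succ j ih =>
        intro A B
        have hpj : (0:ℝ) ≤ ((n : ℝ) * η) ^ j := pow_nonneg hnη0 j
        calc |F A B| ≤ |E A B| + ∑ Q, |E A Q| * |F Q B| := habs A B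
          _ ≤ η * m A B + ∑ _Q : Fin n,
                (2 * η * η * m A B + ((n : ℝ) * η) ^ j * (2 * η) * η) := by
              refine add_le_add (hEb A B) (Finset.sum_le_sum fun Q _ => ?_)
              have h5 : |E A Q| * |F Q B| ≤
                  (η * m A Q) * (2 * η * m Q B + ((n : ℝ) * η) ^ j * (2 * η)) := by
                refine mul_le_mul (hEb A Q) (ih Q B) (abs_nonneg _) ?_
                positivity
              refine le_trans h5 ?_
              have h6 : (η * m A Q) * (2 * η * m Q B) ≤ 2 * η * η * m A B := by
                have h := mul_le_mul_of_nonneg_left (hm_sub A B Q)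
                  (show (0:ℝ) ≤ 2 * η * η by positivity)
                nlinarith [h]
              have h7 : (η * m A Q) * (((n : ℝ) * η) ^ j * (2 * η)) ≤
                  ((n : ℝ) * η) ^ j * (2 * η) * η := by
                have h := mul_le_mul_of_nonneg_left (hm_le1 A Q)
                  (show (0:ℝ) ≤ ((n : ℝ) * η) ^ j * (2 * η) * η by positivity)
                nlinarith [h]
              nlinarith
          _ = η * m A B + (n : ℝ) * (2 * η * η * m A B + ((n : ℝ) * η) ^ j * (2 * η) * η) := by
              rw [Finset.sum_const, Finset.card_univ, Fintype.card_fin, nsmul_eq_mul]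
          _ ≤ 2 * η * m A B + ((n : ℝ) * η) ^ (j + 1) * (2 * η) := by
              have hps : ((n : ℝ) * η) ^ (j + 1) = ((n : ℝ) * η) ^ j * ((n : ℝ) * η) :=
                pow_succ _ _
              have hmn : 0 ≤ m A B := (hm_pos A B).le
              have h := mul_le_mul_of_nonneg_right
                (show 2 * ((n:ℝ) * η) ≤ 1 by linarith) (mul_nonneg hη0 hmn)
              rw [hps]
              nlinarith [h]
  -- conclude
  intro A B
  have hfin := hind k A B
  have hrem : ((n : ℝ) * η) ^ k * (2 * η) ≤ η * m A B := by
    have h8 : ((n : ℝ) * η) ^ k * (2 * η) ≤ (η * Real.exp (2 * D * ρ)) * (2 * η) :=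
      mul_le_mul_of_nonneg_right hkη (by linarith)
    have h9 : (η * Real.exp (2 * D * ρ)) * (2 * η) ≤ (η * m A B) * (2 * η) := by
      have h := mul_le_mul_of_nonneg_left (hm_ge A B)
        (show (0:ℝ) ≤ 2 * η * η by positivity)
      nlinarith [h]
    have h10 : (η * m A B) * (2 * η) ≤ η * m A B := by
      have hmn : 0 ≤ η * m A B := mul_nonneg hη0 (hm_pos A B).le
      nlinarith
    linarith
  have hgoal : |F A B| ≤ 3 * η * m A B := by
    have := hfin
    nlinarith [mul_nonneg hη0 (hm_pos A B).le]
  calc |X⁻¹ A B - (if A = B then 1 else 0)| = |F A B| := by rw [hFdef]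
    _ ≤ 3 * η * m A B := hgoal
    _ = 3 * C * jbr ρ ^ a * Real.exp (2 * ε * ρ) *
          min 1 (Real.exp (2 * (p B - p A) * ρ)) := by
        simp only [hηdef, hφ, hm]; ring
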